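/- Let W₁ and W₂ be regularized wavelet sets with wavelet induced isomorphisms h₁ = h̃_{W₁} and h₂ = h̃_{W₂}. Set ω := {x ∈ [0,1) : h₁(x) ≠ h₂(x)} and ω' := {x ∈ [0,1) : h₁^{-1}(x) ≠ h₂^{-1}(x)}. Then d(W₁, W₂) = (4π μ(ω'))^{1/2} + (2 ν(ω))^{1/2}. -/

import Mathlib

open MeasureTheory Set Real Filter
open scoped symmDiff Classical

noncomputable section

/-- The Littlewood–Paley set `E = [-2π,-π) ∪ [π,2π)`. -/
def E : Set ℝ := Ico (-(2*π)) (-π) ∪ Ico π (2*π)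

/-- `tau x = x + 2jπ`, where `j` is the unique integer with `x + 2jπ ∈ E`. -/
def tau (x : ℝ) : ℝ :=
  if x - 2*π*(⌊x/(2*π)⌋ : ℝ) < π then x - 2*π*(⌊x/(2*π)⌋ : ℝ) - 2*π
  else x - 2*π*(⌊x/(2*π)⌋ : ℝ)

/-- `delta x = 2^k x`, where (for `x ≠ 0`) `k` is the unique integer with `2^k x ∈ E`. -/
def delta (x : ℝ) : ℝ :=
  if 0 < x then (2:ℝ)^(⌈Real.logb 2 (π/x)⌉) * x
  else (2:ℝ)^(⌊Real.logb 2 (2*π/(-x))⌋) * x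

/-- The map `ξ : E → [0,1)`. -/
def xiMap (x : ℝ) : ℝ := if x < 0 then x/(2*π) + 1 else x/(2*π)

/-- The inverse `ξ⁻¹ : [0,1) → E`. -/
def xiInv (y : ℝ) : ℝ := if y < 1/2 then 2*π*(y-1) else 2*π*y

/-- The translates `{W + 2kπ}_{k ∈ ℤ}` form a partition of `ℝ`. -/
def TransPartition (W : Set ℝ) : Prop :=
  (⋃ k : ℤ, (fun x : ℝ => x + 2*π*(k:ℝ)) '' W) = univ ∧
  Pairwise fun k l : ℤ =>
    Disjoint ((fun x : ℝ => x + 2*π*(k:ℝ)) '' W) ((fun x : ℝ => x + 2*π*(l:ℝ)) '' W)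

/-- The dilates `{2^k W}_{k ∈ ℤ}` form a partition of `ℝ \ {0}`. -/
def DilPartition (W : Set ℝ) : Prop :=
  (⋃ k : ℤ, (fun x : ℝ => (2:ℝ)^k * x) '' W) = {(0:ℝ)}ᶜ ∧
  Pairwise fun k l : ℤ =>
    Disjoint ((fun x : ℝ => (2:ℝ)^k * x) '' W) ((fun x : ℝ => (2:ℝ)^l * x) '' W)

/-- A regularized wavelet set. -/
def IsRegularizedWaveletSet (W : Set ℝ) : Prop :=
  MeasurableSet W ∧ TransPartition W ∧ DilPartition W

/-- The wavelet induced isomorphism `h̃_W = ξ ∘ τ|_W ∘ (δ|_W)⁻¹ ∘ ξ⁻¹` of `[0,1)`. -/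
def hIso (W : Set ℝ) : ℝ → ℝ :=
  fun t => xiMap (tau (Function.invFunOn delta W (xiInv t)))

/-- The class of wavelet induced maps of `[0,1)` (Proposition 2.3 (i)-(ii)). -/
def IsWaveletInduced (h : ℝ → ℝ) : Prop :=
  Set.BijOn h (Ico (0:ℝ) 1) (Ico (0:ℝ) 1) ∧
  Measurable ((Ico (0:ℝ) 1).restrict h) ∧
  ∃ A B : ℤ → Set ℝ,
    (∀ k, MeasurableSet (A k)) ∧ (∀ k, MeasurableSet (B k)) ∧
    (⋃ k, A k) = Ico (1/2 : ℝ) 1 ∧ Pairwise (Function.onFun Disjoint A) ∧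
    (⋃ k, B k) = Ico (0:ℝ) (1/2) ∧ Pairwise (Function.onFun Disjoint B) ∧
    (∀ k, ∀ x ∈ A k, h x = Int.fract ((2:ℝ)^k * x)) ∧
    (∀ k, ∀ x ∈ B k, h x = Int.fract ((2:ℝ)^k * (x - 1)))

/-- The class `WI₁`. -/
def MemWI1 (f : ℝ → ℝ) : Prop :=
  ∃ A B : ℕ → Set ℝ,
    (∀ k, MeasurableSet (A k)) ∧ (∀ k, MeasurableSet (B k)) ∧
    (⋃ k, A k) = Ico (1/2 : ℝ) 1 ∧ Pairwise (Function.onFun Disjoint A) ∧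
    (⋃ k, B k) = Ico (0:ℝ) (1/2) ∧ Pairwise (Function.onFun Disjoint B) ∧
    (∀ k, ∀ x ∈ A k, f x = x / 2^(k+1)) ∧
    (∀ k, ∀ x ∈ B k, f x = (x - 1) / 2^(k+1) + 1)

/-- The class `WI₂`. -/
def MemWI2 (g : ℝ → ℝ) : Prop :=
  Measurable ((Ico (0:ℝ) 1).restrict g) ∧
  Set.MapsTo g (Ico (0:ℝ) 1) (Ico (0:ℝ) 1) ∧
  Set.InjOn g (Ico (0:ℝ) 1) ∧
  ∀ x ∈ Ico (0:ℝ) 1, ∃ k l : ℕ, g x = (x + l) / 2^k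

/-- The Schröder–Cantor–Bernstein map `u ⋄ v` for injections between arbitrary types. -/
def scb {α β : Type*} (u : α → β) (v : β → α) : α → β :=
  fun x =>
    if x ∈ ⋃ k : ℕ, (v ∘ u)^[k] '' (Set.range v)ᶜ then u x
    else if h2 : x ∈ Set.range v then Classical.choose h2
    else u x

/-- The Schröder–Cantor–Bernstein map `u ⋄ v` for maps of `[0,1)`. -/
def scbOn (u v : ℝ → ℝ) : ℝ → ℝ :=
  fun x =>
    if x ∈ ⋃ k : ℕ, (v ∘ u)^[k] '' (Ico (0:ℝ) 1 \ v '' (Ico (0:ℝ) 1)) then u x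
    else Function.invFunOn v (Ico (0:ℝ) 1) x

/-- The metric `d` on wavelet sets. -/
def dws (W₁ W₂ : Set ℝ) : ℝ :=
  Real.sqrt (volume (W₁ ∆ W₂)).toReal + Real.sqrt (∫ x in W₁ ∆ W₂, |x|⁻¹)

/-- The measure `ν` on `[0,1)` with density `(1-x)⁻¹` on `[0,1/2)` and `x⁻¹` on `[1/2,1)`. -/
def nuMeasure : Measure ℝ :=
  volume.withDensity (fun x =>
    ENNReal.ofReal (if x ∈ Ico (0:ℝ) (1/2) then (1-x)⁻¹
      else if x ∈ Ico (1/2:ℝ) 1 then x⁻¹ else 0))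

/-!
`tau` and `delta` restrict to bijections from every regularized wavelet set onto `E`, and they
are piecewise a translation and a dilation respectively. Hence `tau` preserves Lebesgue measure and
`delta` preserves the dilation-invariant measure `|x|⁻¹ dx` on sets where they are injective, and
since `W₁ \ W₂` and `W₂ \ W₁` have the same image under each of them, the two terms of
`d(W₁, W₂)` are `(2 μ(τ(W₁ \ W₂)))^{1/2}` and `(2 ∫_{δ(W₁ \ W₂)} |x|⁻¹)^{1/2}`.
On the other side, `hIso W₁` and `hIso W₂` differ exactly on `ξ(δ(W₁ \ W₂))`, and their
inverses exactly on `ξ(τ(W₁ \ W₂))`, except at the countably many `x` admitting some `y ≠ x`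
with both `δ y = δ x` and `τ y = τ x`. Finally `ξ` scales Lebesgue measure on `E` by `(2π)⁻¹`
and carries `|x|⁻¹ dx` on `E` to `ν`.
-/

open Function

section Images

variable {α β γ ι : Type*}

theorem image_diff_subset_image_diff {f : α → β} {W₁ W₂ : Set α} (h₁ : InjOn f W₁)
    (him : f '' W₁ ⊆ f '' W₂) : f '' (W₁ \ W₂) ⊆ f '' (W₂ \ W₁) := by
  rintro _ ⟨w, ⟨hw₁, hw₂⟩, rfl⟩
  obtain ⟨w', hw', he⟩ := him (mem_image_of_mem f hw₁)
  exact ⟨w', ⟨hw', fun hw'₁ => hw₂ (h₁ hw'₁ hw₁ he ▸ hw')⟩, he⟩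

theorem image_symmDiff_image_subset (f : α → β) (s t : Set α) :
    (f '' s) ∆ (f '' t) ⊆ f '' (s ∆ t) := by
  rintro _ (⟨⟨x, hx, rfl⟩, hn⟩ | ⟨⟨x, hx, rfl⟩, hn⟩)
  · exact ⟨x, Or.inl ⟨hx, fun h => hn (mem_image_of_mem f h)⟩, rfl⟩
  · exact ⟨x, Or.inr ⟨hx, fun h => hn (mem_image_of_mem f h)⟩, rfl⟩

/-- A map sending each point to the unique point of its orbit in a fundamental domain `E`
restricts to a bijection from every tile of a tiling onto `E`. -/
theorem bijOn_of_pairwise_disjoint_tiles {g : ι → α → α} {r : α → α} {W E : Set α}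
    (hg : ∀ k, Injective (g k)) (hr : ∀ x ∈ W, ∃ k, r x = g k x) (hrE : MapsTo r W E)
    (hE : ∀ x k l, g k x ∈ E → g l x ∈ E → g k x = g l x) (hcover : E ⊆ ⋃ k, g k '' W)
    (hdisj : Pairwise fun k l => Disjoint (g k '' W) (g l '' W)) : BijOn r W E := by
  refine ⟨hrE, fun a ha b hb hab => ?_, fun e he => ?_⟩
  · obtain ⟨m, hm⟩ := hr a ha
    obtain ⟨n, hn⟩ := hr b hb
    obtain rfl | hmn := eq_or_ne m n
    · exact hg m (hm.symm.trans (hab.trans hn))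
    · exact (Set.disjoint_left.1 (hdisj hmn) ⟨a, ha, hm.symm⟩ ⟨b, hb, hn.symm.trans hab.symm⟩).elim
  · obtain ⟨k, w, hw, rfl⟩ := mem_iUnion.1 (hcover he)
    obtain ⟨m, hm⟩ := hr w hw
    exact ⟨w, hw, hm.trans (hE w m k (hm ▸ hrE hw) he)⟩

theorem image_diff_symmDiff_subset_image_collisions [Nonempty α] {p : α → β} {q : α → γ}
    {S : Set β} {W₁ W₂ : Set α} (h₁ : BijOn p W₁ S) (h₂ : BijOn p W₂ S) :
    (p '' (W₁ \ W₂)) ∆ {e ∈ S | q (invFunOn p W₁ e) ≠ q (invFunOn p W₂ e)} ⊆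
      p '' {x | ∃ y ≠ x, p x = p y ∧ q x = q y} := by
  rintro e (⟨⟨w, ⟨hw₁, hw₂⟩, rfl⟩, hagree⟩ | ⟨⟨he, hne⟩, hnot⟩)
  · have hpw : p w ∈ S := h₁.mapsTo hw₁
    have hq : q (invFunOn p W₁ (p w)) = q (invFunOn p W₂ (p w)) := by
      by_contra h; exact hagree ⟨hpw, h⟩
    rw [h₁.injOn.leftInvOn_invFunOn hw₁] at hq
    refine ⟨w, ⟨invFunOn p W₂ (p w), fun h => hw₂ (h ▸ h₂.surjOn.mapsTo_invFunOn hpw), ?_, hq⟩, rfl⟩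
    exact (h₂.surjOn.rightInvOn_invFunOn hpw).symm
  · have hw₁ := h₁.surjOn.mapsTo_invFunOn he
    have hpw := h₁.surjOn.rightInvOn_invFunOn he
    by_cases hw₂ : invFunOn p W₁ e ∈ W₂
    · refine (hne ?_).elim
      conv_rhs => rw [← hpw, h₂.injOn.leftInvOn_invFunOn hw₂]
    · exact (hnot ⟨_, ⟨hw₁, hw₂⟩, hpw⟩).elim

end Images

section Piecewise

variable {α ι : Type*} {f : α → α} {idx : α → ι} {g : ι → α → α} {A : Set α}

theorem image_eq_iUnion_of_eq_piecewise (hfg : ∀ x, f x = g (idx x) x) :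
    f '' A = ⋃ k, g k '' (A ∩ idx ⁻¹' {k}) := by
  ext y
  simp only [mem_image, mem_iUnion, mem_inter_iff, mem_preimage, mem_singleton_iff]
  constructor
  · rintro ⟨x, hx, rfl⟩
    exact ⟨idx x, x, ⟨hx, rfl⟩, (hfg x).symm⟩
  · rintro ⟨k, x, ⟨hx, rfl⟩, rfl⟩
    exact ⟨x, hx, hfg x⟩

variable [Countable ι] [MeasurableSpace ι] [MeasurableSingletonClass ι] [MeasurableSpace α]
  {μ : Measure α}

theorem measurableSet_image_of_eq_piecewise (hidx : Measurable idx)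
    (hfg : ∀ x, f x = g (idx x) x) (hg : ∀ k s, MeasurableSet s → MeasurableSet (g k '' s))
    (hA : MeasurableSet A) : MeasurableSet (f '' A) := by
  rw [image_eq_iUnion_of_eq_piecewise hfg]
  exact .iUnion fun k => hg k _ (hA.inter (hidx (measurableSet_singleton k)))

theorem measure_image_of_eq_piecewise (hidx : Measurable idx) (hfg : ∀ x, f x = g (idx x) x)
    (hg : ∀ k s, MeasurableSet s → MeasurableSet (g k '' s))
    (hgμ : ∀ k s, MeasurableSet s → μ (g k '' s) = μ s)
    (hA : MeasurableSet A) (hinj : InjOn f A) : μ (f '' A) = μ A := by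
  have hP : ∀ k, MeasurableSet (A ∩ idx ⁻¹' {k}) :=
    fun k => hA.inter (hidx (measurableSet_singleton k))
  have hdisj : Pairwise (Disjoint on fun k => g k '' (A ∩ idx ⁻¹' {k})) := by
    refine fun k l hkl => Set.disjoint_left.2 ?_
    rintro _ ⟨x, ⟨hx, rfl⟩, rfl⟩ ⟨x', ⟨hx', rfl⟩, hxx'⟩
    exact hkl (congrArg idx (hinj hx hx' ((hfg x).trans (hxx'.symm.trans (hfg x').symm))))
  calc μ (f '' A) = ∑' k, μ (g k '' (A ∩ idx ⁻¹' {k})) := by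
        rw [image_eq_iUnion_of_eq_piecewise hfg, measure_iUnion hdisj fun k => hg k _ (hP k)]
    _ = ∑' k, μ (A ∩ idx ⁻¹' {k}) := by simp_rw [hgμ _ _ (hP _)]
    _ = μ A := by
        rw [← measure_iUnion (fun k l hkl => ((disjoint_singleton.2 hkl).preimage idx).mono
          inter_subset_right inter_subset_right) hP, ← inter_iUnion, ← preimage_iUnion,
          iUnion_of_singleton, preimage_univ, inter_univ]

end Piecewise

theorem measure_symmDiff_eq_two_mul_measure_image {α : Type*} [MeasurableSpace α]
    {μ : Measure α} {f : α → α} {W₁ W₂ : Set α}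
    (hf : ∀ A, MeasurableSet A → InjOn f A → μ (f '' A) = μ A)
    (hW₁ : MeasurableSet W₁) (hW₂ : MeasurableSet W₂) (h₁ : InjOn f W₁) (h₂ : InjOn f W₂)
    (him : f '' W₁ = f '' W₂) : μ (W₁ ∆ W₂) = 2 * μ (f '' (W₁ \ W₂)) := by
  have himage : f '' (W₂ \ W₁) = f '' (W₁ \ W₂) :=
    (image_diff_subset_image_diff h₂ him.ge).antisymm (image_diff_subset_image_diff h₁ him.le)
  rw [measure_symmDiff_eq hW₁.nullMeasurableSet hW₂.nullMeasurableSet,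
    ← hf _ (hW₁.diff hW₂) (h₁.mono sdiff_subset), ← hf _ (hW₂.diff hW₁) (h₂.mono sdiff_subset),
    himage, two_mul]

theorem mem_E_iff {x : ℝ} : x ∈ E ↔ (-(2*π) ≤ x ∧ x < -π) ∨ (π ≤ x ∧ x < 2*π) := by
  simp only [E, mem_union, mem_Ico]

theorem ne_zero_of_mem_E {x : ℝ} (hx : x ∈ E) : x ≠ 0 := by
  rcases mem_E_iff.1 hx with ⟨_, h⟩ | ⟨h, _⟩ <;> linarith [pi_pos]

theorem eq_of_add_two_pi_mul_mem_E {x : ℝ} {k l : ℤ} (hk : x + 2*π*k ∈ E)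
    (hl : x + 2*π*l ∈ E) : k = l := by
  have hπ := pi_pos
  have hne_of_lt : ∀ m n : ℤ, m < n → x + 2*π*m ∈ E → x + 2*π*n ∈ E → False := by
    intro m n hmn hm hn
    rw [mem_E_iff] at hm hn
    obtain h | h : (m:ℝ) + 1 = n ∨ (m:ℝ) + 2 ≤ n := by
      rcases (show m + 1 = n ∨ m + 2 ≤ n by omega) with h | h
      · exact Or.inl (by exact_mod_cast h)
      · exact Or.inr (by exact_mod_cast h)
    · rw [← h] at hn
      rcases hm with hm | hm <;> rcases hn with hn | hn <;> nlinarith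
    · rcases hm with hm | hm <;> rcases hn with hn | hn <;> nlinarith
  rcases lt_trichotomy k l with h | h | h
  · exact (hne_of_lt k l h hk hl).elim
  · exact h
  · exact (hne_of_lt l k h hl hk).elim

theorem le_of_two_zpow_mul_lt {y : ℝ} (hy : 0 < y) {k l : ℤ} (h : 2^k * y < 2 * (2^l * y)) :
    k ≤ l := by
  have h2 : (2:ℝ)^k < 2^(l+1) := by
    rw [zpow_add_one₀ two_ne_zero]; nlinarith
  have := (zpow_lt_zpow_iff_right₀ one_lt_two).1 h2
  omega

theorem eq_of_two_zpow_mul_mem_E {x : ℝ} {k l : ℤ} (hk : 2^k * x ∈ E) (hl : 2^l * x ∈ E) :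
    k = l := by
  have hπ := pi_pos
  have hk0 : (0:ℝ) < 2^k := by positivity
  have hl0 : (0:ℝ) < 2^l := by positivity
  rw [mem_E_iff] at hk hl
  rcases lt_trichotomy x 0 with hx | rfl | hx
  · have hk' : π < 2^k * -x ∧ 2^k * -x ≤ 2*π := by
      rcases hk with hk | hk
      · constructor <;> linarith
      · nlinarith
    have hl' : π < 2^l * -x ∧ 2^l * -x ≤ 2*π := by
      rcases hl with hl | hl
      · constructor <;> linarith
      · nlinarith
    exact le_antisymm (le_of_two_zpow_mul_lt (neg_pos.2 hx) (by linarith))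
      (le_of_two_zpow_mul_lt (neg_pos.2 hx) (by linarith))
  · simp only [mul_zero] at hk; rcases hk with hk | hk <;> linarith
  · have hk' : π ≤ 2^k * x ∧ 2^k * x < 2*π := by
      rcases hk with hk | hk
      · nlinarith
      · exact hk
    have hl' : π ≤ 2^l * x ∧ 2^l * x < 2*π := by
      rcases hl with hl | hl
      · nlinarith
      · exact hl
    exact le_antisymm (le_of_two_zpow_mul_lt hx (by linarith))
      (le_of_two_zpow_mul_lt hx (by linarith))

def tauIndex (x : ℝ) : ℤ :=
  if x - 2*π*(⌊x/(2*π)⌋ : ℝ) < π then -⌊x/(2*π)⌋ - 1 else -⌊x/(2*π)⌋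

def deltaIndex (x : ℝ) : ℤ :=
  if 0 < x then ⌈logb 2 (π/x)⌉ else ⌊logb 2 (2*π/(-x))⌋

theorem tau_eq_add (x : ℝ) : tau x = x + 2*π*tauIndex x := by
  unfold tau tauIndex
  split_ifs <;> push_cast <;> ring

theorem delta_eq_mul (x : ℝ) : delta x = 2^deltaIndex x * x := by
  unfold delta deltaIndex
  split_ifs <;> rfl

theorem measurable_tauIndex : Measurable tauIndex := by
  have hfl : Measurable fun x : ℝ => ⌊x/(2*π)⌋ := Int.measurable_floor.comp (by fun_prop)
  exact Measurable.ite (measurableSet_lt (by fun_prop) measurable_const)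
    (hfl.neg.sub measurable_const) hfl.neg

theorem measurable_deltaIndex : Measurable deltaIndex := by
  unfold deltaIndex logb
  exact Measurable.ite (measurableSet_lt measurable_const measurable_id)
    (Int.measurable_ceil.comp (by fun_prop)) (Int.measurable_floor.comp (by fun_prop))

theorem tau_mem_E (x : ℝ) : tau x ∈ E := by
  have h2π := two_pi_pos
  have h1 : (⌊x/(2*π)⌋ : ℝ) ≤ x/(2*π) := Int.floor_le _
  have h2 : x/(2*π) < ⌊x/(2*π)⌋ + 1 := Int.lt_floor_add_one _
  rw [le_div_iff₀ h2π] at h1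
  rw [div_lt_iff₀ h2π] at h2
  rw [mem_E_iff]; unfold tau; split_ifs with h
  · left; constructor <;> nlinarith
  · right; constructor <;> nlinarith

theorem delta_mem_E {x : ℝ} (hx : x ≠ 0) : delta x ∈ E := by
  have hπ := pi_pos
  rw [mem_E_iff, delta_eq_mul, deltaIndex]
  split_ifs with h
  · have hy : 0 < π/x := by positivity
    have hc : ⌈logb 2 (π/x)⌉ = Int.clog 2 (π/x) := by exact_mod_cast ceil_logb_natCast hy.le
    have h1 : π/x ≤ 2^⌈logb 2 (π/x)⌉ := by exact_mod_cast hc ▸ Int.self_le_zpow_clog one_lt_two _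
    have h2 : (2:ℝ)^(⌈logb 2 (π/x)⌉ - 1) < π/x := by
      exact_mod_cast hc ▸ Int.zpow_pred_clog_lt_self one_lt_two hy
    rw [zpow_sub_one₀ two_ne_zero] at h2
    rw [div_le_iff₀ h] at h1
    rw [lt_div_iff₀ h] at h2
    right; constructor <;> linarith
  · have hx' : 0 < -x := by
      rcases (not_lt.1 h).lt_or_eq with h' | h'
      · linarith
      · exact absurd h' hx
    have hy : 0 < 2*π/(-x) := by positivity
    have hc : ⌊logb 2 (2*π/(-x))⌋ = Int.log 2 (2*π/(-x)) := by
      exact_mod_cast floor_logb_natCast hy.le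
    have h1 : (2:ℝ)^⌊logb 2 (2*π/(-x))⌋ ≤ 2*π/(-x) := by
      exact_mod_cast hc ▸ Int.zpow_log_le_self one_lt_two hy
    have h2 : 2*π/(-x) < (2:ℝ)^(⌊logb 2 (2*π/(-x))⌋ + 1) := by
      exact_mod_cast hc ▸ Int.lt_zpow_succ_log_self one_lt_two _
    rw [zpow_add_one₀ two_ne_zero] at h2
    rw [le_div_iff₀ hx'] at h1
    rw [div_lt_iff₀ hx'] at h2
    left; constructor <;> nlinarith

theorem countable_setOf_delta_eq_tau_eq :
    {x : ℝ | ∃ y ≠ x, delta x = delta y ∧ tau x = tau y}.Countable := by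
  refine (countable_range fun p : ℤ × ℤ × ℤ => 2^p.2.1 * (2*π*p.2.2) / (2^p.1 - 2^p.2.1)).mono ?_
  rintro x ⟨y, hyx, hδ, hτ⟩
  obtain ⟨j, k, hjk⟩ : ∃ j k : ℤ, 2^j * x = 2^k * y :=
    ⟨deltaIndex x, deltaIndex y, by rw [← delta_eq_mul, ← delta_eq_mul, hδ]⟩
  obtain ⟨n, hn⟩ : ∃ n : ℤ, y = x + 2*π*n := by
    refine ⟨tauIndex x - tauIndex y, ?_⟩
    have := tau_eq_add x ▸ tau_eq_add y ▸ hτ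
    push_cast; linarith
  have hne : (2:ℝ)^j - 2^k ≠ 0 := by
    intro h
    rw [sub_eq_zero.1 h] at hjk
    exact hyx (mul_left_cancel₀ (zpow_ne_zero _ two_ne_zero) hjk).symm
  refine ⟨(j, k, n), (div_eq_iff hne).2 ?_⟩
  rw [hn] at hjk
  linear_combination -hjk

theorem zero_notMem_of_dilPartition {W : Set ℝ} (hW : DilPartition W) : (0:ℝ) ∉ W := by
  intro h0
  have : (0:ℝ) ∈ ⋃ k : ℤ, (fun x : ℝ => (2:ℝ)^k * x) '' W := mem_iUnion.2 ⟨0, 0, h0, by simp⟩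
  exact (hW.1 ▸ this) rfl

theorem bijOn_tau {W : Set ℝ} (hW : TransPartition W) : BijOn tau W E :=
  bijOn_of_pairwise_disjoint_tiles (g := fun (k : ℤ) (x : ℝ) => x + 2*π*k)
    (fun _ => add_left_injective _) (fun x _ => ⟨tauIndex x, tau_eq_add x⟩)
    (fun x _ => tau_mem_E x) (fun x k l hk hl => by rw [eq_of_add_two_pi_mul_mem_E hk hl])
    (hW.1 ▸ subset_univ E) hW.2

theorem bijOn_delta {W : Set ℝ} (hW : DilPartition W) : BijOn delta W E :=
  bijOn_of_pairwise_disjoint_tiles (g := fun (k : ℤ) (x : ℝ) => 2^k * x)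
    (fun _ => mul_right_injective₀ (zpow_ne_zero _ two_ne_zero))
    (fun x _ => ⟨deltaIndex x, delta_eq_mul x⟩)
    (fun x hx => delta_mem_E fun h => zero_notMem_of_dilPartition hW (h ▸ hx))
    (fun x k l hk hl => by rw [eq_of_two_zpow_mul_mem_E hk hl])
    (hW.1 ▸ fun x hx => ne_zero_of_mem_E hx) hW.2

def invAbsMeasure : Measure ℝ := volume.withDensity fun x => ENNReal.ofReal |x|⁻¹

theorem invAbsMeasure_image_mul {c : ℝ} (hc : c ≠ 0) {s : Set ℝ} (hs : MeasurableSet s) :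
    invAbsMeasure ((c * ·) '' s) = invAbsMeasure s := by
  rw [invAbsMeasure, withDensity_apply' _, withDensity_apply' _,
    lintegral_image_eq_lintegral_abs_deriv_mul hs
      (fun x _ => (hasDerivAt_const_mul c).hasDerivWithinAt) (mul_right_injective₀ hc).injOn]
  refine lintegral_congr fun x => ?_
  rw [← ENNReal.ofReal_mul (abs_nonneg c), abs_mul, mul_inv, ← mul_assoc,
    mul_inv_cancel₀ (abs_ne_zero.2 hc), one_mul]

theorem integral_inv_abs (s : Set ℝ) : ∫ x in s, |x|⁻¹ = (invAbsMeasure s).toReal := by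
  rw [integral_eq_lintegral_of_nonneg_ae (ae_of_all _ fun x => inv_nonneg.2 (abs_nonneg x))
    (by fun_prop), invAbsMeasure, withDensity_apply']

theorem measurableSet_image_tau {A : Set ℝ} (hA : MeasurableSet A) :
    MeasurableSet (tau '' A) :=
  measurableSet_image_of_eq_piecewise (g := fun (k : ℤ) (x : ℝ) => x + 2*π*k)
    measurable_tauIndex tau_eq_add
    (fun _ _ hs => (measurableEmbedding_addRight _).measurableSet_image.2 hs) hA

theorem volume_image_tau {A : Set ℝ} (hA : MeasurableSet A) (hinj : InjOn tau A) :
    volume (tau '' A) = volume A :=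
  measure_image_of_eq_piecewise (g := fun (k : ℤ) (x : ℝ) => x + 2*π*k)
    measurable_tauIndex tau_eq_add
    (fun _ _ hs => (measurableEmbedding_addRight _).measurableSet_image.2 hs)
    (fun _ _ _ => by simp) hA hinj

theorem measurableSet_image_delta {A : Set ℝ} (hA : MeasurableSet A) :
    MeasurableSet (delta '' A) :=
  measurableSet_image_of_eq_piecewise (g := fun (k : ℤ) (x : ℝ) => 2^k * x)
    measurable_deltaIndex delta_eq_mul
    (fun _ _ hs =>
      (measurableEmbedding_mulLeft₀ (zpow_ne_zero _ two_ne_zero)).measurableSet_image.2 hs) hA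

theorem invAbsMeasure_image_delta {A : Set ℝ} (hA : MeasurableSet A) (hinj : InjOn delta A) :
    invAbsMeasure (delta '' A) = invAbsMeasure A :=
  measure_image_of_eq_piecewise (g := fun (k : ℤ) (x : ℝ) => 2^k * x)
    measurable_deltaIndex delta_eq_mul
    (fun _ _ hs =>
      (measurableEmbedding_mulLeft₀ (zpow_ne_zero _ two_ne_zero)).measurableSet_image.2 hs)
    (fun _ _ hs => invAbsMeasure_image_mul (zpow_ne_zero _ two_ne_zero) hs) hA hinj

theorem xiMap_of_neg {e : ℝ} (h1 : -(2*π) ≤ e) (h2 : e < -π) :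
    xiMap e = e/(2*π) + 1 ∧ xiMap e ∈ Ico (0:ℝ) (1/2) := by
  have h2π := two_pi_pos
  have hx : xiMap e = e/(2*π) + 1 := if_pos (by linarith [pi_pos])
  refine ⟨hx, ?_, ?_⟩ <;> rw [hx]
  · have : -1 ≤ e/(2*π) := by rw [le_div_iff₀ h2π]; linarith
    linarith
  · have : e/(2*π) < -(1/2) := by rw [div_lt_iff₀ h2π]; linarith
    linarith

theorem xiMap_of_pos {e : ℝ} (h1 : π ≤ e) (h2 : e < 2*π) :
    xiMap e = e/(2*π) ∧ xiMap e ∈ Ico (1/2:ℝ) 1 := by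
  have h2π := two_pi_pos
  have hx : xiMap e = e/(2*π) := if_neg (by linarith [pi_pos])
  refine ⟨hx, ?_, ?_⟩ <;> rw [hx]
  · rw [le_div_iff₀ h2π]; linarith
  · rw [div_lt_iff₀ h2π]; linarith

theorem xiMap_mem_Ico {e : ℝ} (he : e ∈ E) : xiMap e ∈ Ico (0:ℝ) 1 := by
  rcases mem_E_iff.1 he with ⟨h1, h2⟩ | ⟨h1, h2⟩
  · exact Ico_subset_Ico_right (by norm_num) (xiMap_of_neg h1 h2).2
  · exact Ico_subset_Ico_left (by norm_num) (xiMap_of_pos h1 h2).2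

theorem xiInv_xiMap {e : ℝ} (he : e ∈ E) : xiInv (xiMap e) = e := by
  have hπ := pi_pos
  rcases mem_E_iff.1 he with ⟨h1, h2⟩ | ⟨h1, h2⟩
  · obtain ⟨hx, hmem⟩ := xiMap_of_neg h1 h2
    rw [xiInv, if_pos hmem.2, hx]
    field_simp; ring
  · obtain ⟨hx, hmem⟩ := xiMap_of_pos h1 h2
    rw [xiInv, if_neg hmem.1.not_gt, hx]
    field_simp

theorem xiInv_mem_E {t : ℝ} (ht : t ∈ Ico (0:ℝ) 1) : xiInv t ∈ E := by
  have hπ := pi_pos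
  obtain ⟨h0, h1⟩ := ht
  rw [mem_E_iff, xiInv]
  split_ifs with h
  · left; constructor <;> nlinarith
  · right; constructor <;> nlinarith

theorem xiMap_xiInv (t : ℝ) : xiMap (xiInv t) = t := by
  have hπ := pi_pos
  unfold xiInv
  split_ifs with h
  · rw [xiMap, if_pos (by nlinarith)]
    field_simp; ring
  · rw [xiMap, if_neg (by nlinarith)]
    field_simp

theorem injOn_xiMap : InjOn xiMap E := fun a ha b hb h => by
  rw [← xiInv_xiMap ha, ← xiInv_xiMap hb, h]

theorem hasDerivAt_xiMap {x : ℝ} (hx : x ≠ 0) : HasDerivAt xiMap (2*π)⁻¹ x := by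
  have hd : HasDerivAt (fun y : ℝ => y / (2*π)) (2*π)⁻¹ x := by
    simpa [one_div] using (hasDerivAt_id x).div_const (2*π)
  rcases hx.lt_or_gt with hx | hx
  · exact (hd.add_const 1).congr_of_eventuallyEq
      ((eventually_lt_nhds hx).mono fun y hy => if_pos hy)
  · exact hd.congr_of_eventuallyEq ((eventually_gt_nhds hx).mono fun y hy => if_neg hy.not_gt)

theorem nuMeasure_image_xiMap {S : Set ℝ} (hS : MeasurableSet S) (hSE : S ⊆ E) :
    nuMeasure (xiMap '' S) = invAbsMeasure S := by
  rw [nuMeasure, withDensity_apply', lintegral_image_eq_lintegral_abs_deriv_mul hS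
    (fun x hx => (hasDerivAt_xiMap (ne_zero_of_mem_E (hSE hx))).hasDerivWithinAt)
    (injOn_xiMap.mono hSE), invAbsMeasure, withDensity_apply _ hS]
  refine setLIntegral_congr_fun hS fun x hx => ?_
  rw [← ENNReal.ofReal_mul (abs_nonneg _)]
  congr 1
  rw [abs_of_pos (by positivity)]
  rcases mem_E_iff.1 (hSE hx) with ⟨h1, h2⟩ | ⟨h1, h2⟩
  · obtain ⟨hξ, hmem⟩ := xiMap_of_neg h1 h2
    rw [if_pos hmem, hξ, abs_of_neg (by linarith [pi_pos])]
    field_simp; ring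
  · obtain ⟨hξ, hmem⟩ := xiMap_of_pos h1 h2
    rw [if_neg fun h => hmem.1.not_gt h.2, if_pos hmem, hξ, abs_of_pos (by linarith [pi_pos])]
    field_simp

theorem volume_image_xiMap {S : Set ℝ} (hS : MeasurableSet S) (hSE : S ⊆ E) :
    volume (xiMap '' S) = ENNReal.ofReal (2*π)⁻¹ * volume S := by
  rw [← setLIntegral_one, lintegral_image_eq_lintegral_abs_deriv_mul hS
    (fun x hx => (hasDerivAt_xiMap (ne_zero_of_mem_E (hSE hx))).hasDerivWithinAt)
    (injOn_xiMap.mono hSE), setLIntegral_const, mul_one, abs_of_pos (by positivity)]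

/-- `hIso W` is `inducedMap delta tau W`; exchanging the roles of `delta` and `tau` inverts it. -/
def inducedMap (p q : ℝ → ℝ) (W : Set ℝ) (t : ℝ) : ℝ := xiMap (q (invFunOn p W (xiInv t)))

section InducedMap

variable {p q : ℝ → ℝ} {W W₁ W₂ : Set ℝ}

theorem inducedMap_mem_Ico (hp : SurjOn p W E) (hq : MapsTo q W E) {t : ℝ}
    (ht : t ∈ Ico (0:ℝ) 1) : inducedMap p q W t ∈ Ico (0:ℝ) 1 :=
  xiMap_mem_Ico (hq (hp.mapsTo_invFunOn (xiInv_mem_E ht)))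

theorem inducedMap_inducedMap (hp : BijOn p W E) (hq : BijOn q W E) {t : ℝ}
    (ht : t ∈ Ico (0:ℝ) 1) : inducedMap p q W (inducedMap q p W t) = t := by
  have he := xiInv_mem_E ht
  have hw := hq.surjOn.mapsTo_invFunOn he
  rw [inducedMap, inducedMap, xiInv_xiMap (hp.mapsTo hw), hp.injOn.leftInvOn_invFunOn hw,
    hq.surjOn.rightInvOn_invFunOn he, xiMap_xiInv]

theorem eqOn_invFunOn_inducedMap (hp : BijOn p W E) (hq : BijOn q W E) :
    EqOn (invFunOn (inducedMap p q W) (Ico 0 1)) (inducedMap q p W) (Ico 0 1) :=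
  eqOn_of_leftInvOn_of_rightInvOn
    (LeftInvOn.injOn (fun _ ht => inducedMap_inducedMap hq hp ht)).leftInvOn_invFunOn
    (fun _ ht => inducedMap_inducedMap hp hq ht)
    (fun _ ht => inducedMap_mem_Ico hq.surjOn hp.mapsTo ht)

theorem setOf_inducedMap_ne_eq_image (hp₁ : SurjOn p W₁ E) (hp₂ : SurjOn p W₂ E)
    (hq₁ : MapsTo q W₁ E) (hq₂ : MapsTo q W₂ E) :
    {t ∈ Ico (0:ℝ) 1 | inducedMap p q W₁ t ≠ inducedMap p q W₂ t} =
      xiMap '' {e ∈ E | q (invFunOn p W₁ e) ≠ q (invFunOn p W₂ e)} := by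
  ext t
  constructor
  · rintro ⟨ht, hne⟩
    exact ⟨xiInv t, ⟨xiInv_mem_E ht, fun h => hne (by rw [inducedMap, inducedMap, h])⟩,
      xiMap_xiInv t⟩
  · rintro ⟨e, ⟨he, hne⟩, rfl⟩
    refine ⟨xiMap_mem_Ico he, ?_⟩
    rw [inducedMap, inducedMap, xiInv_xiMap he]
    exact injOn_xiMap.ne (hq₁ (hp₁.mapsTo_invFunOn he)) (hq₂ (hp₂.mapsTo_invFunOn he)) hne

theorem measure_setOf_inducedMap_ne {μ : Measure ℝ} (hμ : μ ≪ volume) (hp₁ : BijOn p W₁ E)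
    (hp₂ : BijOn p W₂ E) (hq₁ : MapsTo q W₁ E) (hq₂ : MapsTo q W₂ E)
    (hC : {x | ∃ y ≠ x, p x = p y ∧ q x = q y}.Countable) :
    μ {t ∈ Ico (0:ℝ) 1 | inducedMap p q W₁ t ≠ inducedMap p q W₂ t} =
      μ (xiMap '' (p '' (W₁ \ W₂))) := by
  rw [setOf_inducedMap_ne_eq_image hp₁.surjOn hp₂.surjOn hq₁ hq₂]
  refine measure_congr (measure_symmDiff_eq_zero_iff.1 (hμ (measure_mono_null ?_
    (((hC.image p).image xiMap).measure_zero volume))))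
  refine (image_symmDiff_image_subset _ _ _).trans (image_mono ?_)
  rw [symmDiff_comm]
  exact image_diff_symmDiff_subset_image_collisions hp₁ hp₂

end InducedMap

section WaveletSets

variable {W₁ W₂ : Set ℝ}

theorem volume_symmDiff_eq_two_mul (h₁ : IsRegularizedWaveletSet W₁)
    (h₂ : IsRegularizedWaveletSet W₂) :
    volume (W₁ ∆ W₂) = 2 * volume (tau '' (W₁ \ W₂)) :=
  measure_symmDiff_eq_two_mul_measure_image (fun _ => volume_image_tau) h₁.1 h₂.1
    (bijOn_tau h₁.2.1).injOn (bijOn_tau h₂.2.1).injOn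
    ((bijOn_tau h₁.2.1).image_eq.trans (bijOn_tau h₂.2.1).image_eq.symm)

theorem invAbsMeasure_symmDiff_eq_two_mul (h₁ : IsRegularizedWaveletSet W₁)
    (h₂ : IsRegularizedWaveletSet W₂) :
    invAbsMeasure (W₁ ∆ W₂) = 2 * invAbsMeasure (delta '' (W₁ \ W₂)) :=
  measure_symmDiff_eq_two_mul_measure_image (fun _ => invAbsMeasure_image_delta) h₁.1 h₂.1
    (bijOn_delta h₁.2.2).injOn (bijOn_delta h₂.2.2).injOn
    ((bijOn_delta h₁.2.2).image_eq.trans (bijOn_delta h₂.2.2).image_eq.symm)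

theorem nuMeasure_setOf_hIso_ne (h₁ : IsRegularizedWaveletSet W₁)
    (h₂ : IsRegularizedWaveletSet W₂) :
    nuMeasure {x ∈ Ico (0:ℝ) 1 | hIso W₁ x ≠ hIso W₂ x} = invAbsMeasure (delta '' (W₁ \ W₂)) := by
  rw [← nuMeasure_image_xiMap (measurableSet_image_delta (h₁.1.diff h₂.1))
    ((bijOn_delta h₁.2.2).mapsTo.mono_left sdiff_subset).image_subset]
  exact measure_setOf_inducedMap_ne (withDensity_absolutelyContinuous _ _) (bijOn_delta h₁.2.2)
    (bijOn_delta h₂.2.2) (bijOn_tau h₁.2.1).mapsTo (bijOn_tau h₂.2.1).mapsTo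
    countable_setOf_delta_eq_tau_eq

theorem volume_setOf_invFunOn_hIso_ne (h₁ : IsRegularizedWaveletSet W₁)
    (h₂ : IsRegularizedWaveletSet W₂) :
    volume {x ∈ Ico (0:ℝ) 1 |
      invFunOn (hIso W₁) (Ico (0:ℝ) 1) x ≠ invFunOn (hIso W₂) (Ico (0:ℝ) 1) x} =
      ENNReal.ofReal (2*π)⁻¹ * volume (tau '' (W₁ \ W₂)) := by
  have hC : {x | ∃ y ≠ x, tau x = tau y ∧ delta x = delta y}.Countable :=
    countable_setOf_delta_eq_tau_eq.mono <| by rintro x ⟨y, hy, hτ, hδ⟩; exact ⟨y, hy, hδ, hτ⟩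
  have hinv (W : Set ℝ) (hW : IsRegularizedWaveletSet W) :
      EqOn (invFunOn (hIso W) (Ico 0 1)) (inducedMap tau delta W) (Ico 0 1) :=
    eqOn_invFunOn_inducedMap (bijOn_delta hW.2.2) (bijOn_tau hW.2.1)
  rw [sep_ext_iff.2 fun x hx => by rw [hinv W₁ h₁ hx, hinv W₂ h₂ hx],
    measure_setOf_inducedMap_ne .rfl (bijOn_tau h₁.2.1) (bijOn_tau h₂.2.1)
      (bijOn_delta h₁.2.2).mapsTo (bijOn_delta h₂.2.2).mapsTo hC,
    volume_image_xiMap (measurableSet_image_tau (h₁.1.diff h₂.1))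
      ((bijOn_tau h₁.2.1).mapsTo.mono_left sdiff_subset).image_subset]

end WaveletSets

/-- For regularized wavelet sets `W₁, W₂` with induced isomorphisms `h₁, h₂`,
`ω = {h₁ ≠ h₂}` and `ω' = {h₁⁻¹ ≠ h₂⁻¹}` (within `[0,1)`), one has
`d(W₁,W₂) = (4π μ(ω'))^{1/2} + (2 ν(ω))^{1/2}`. -/
theorem dws_eq_formula (W₁ W₂ : Set ℝ)
    (h₁ : IsRegularizedWaveletSet W₁) (h₂ : IsRegularizedWaveletSet W₂) :
    dws W₁ W₂ =
      Real.sqrt (4*π *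
        (volume {x ∈ Ico (0:ℝ) 1 |
          Function.invFunOn (hIso W₁) (Ico (0:ℝ) 1) x ≠
            Function.invFunOn (hIso W₂) (Ico (0:ℝ) 1) x}).toReal) +
      Real.sqrt (2 * (nuMeasure {x ∈ Ico (0:ℝ) 1 | hIso W₁ x ≠ hIso W₂ x}).toReal) := by
  rw [dws, integral_inv_abs, volume_symmDiff_eq_two_mul h₁ h₂,
    invAbsMeasure_symmDiff_eq_two_mul h₁ h₂, nuMeasure_setOf_hIso_ne h₁ h₂,
    volume_setOf_invFunOn_hIso_ne h₁ h₂, ENNReal.toReal_mul, ENNReal.toReal_mul,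
    ENNReal.toReal_mul, ENNReal.toReal_ofReal (by positivity), ENNReal.toReal_ofNat, ← mul_assoc,
    show 4*π*(2*π)⁻¹ = 2 by field_simp; ring]

end
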